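/- Let g be a nilpotent real Lie algebra of dimension 2p+1 (p ≥ 1) admitting a contact form. Then g is a one-dimensional central extension of a Lie algebra admitting an affine structure: the canonical projection π : g → g/Z(g) is a surjective Lie algebra morphism whose kernel Z(g) is one-dimensional and central, and the quotient Lie algebra g/Z(g) admits an affine structure. -/

import Mathlib

/-!
The radical of `dω` meets `ker ω` trivially, so it is at most a line; it contains the center,
which is nonzero by nilpotency, hence equals `Z(g)`. Therefore `dω` descends to a nondegenerate
closed 2-form `θ` on `g ⧸ Z(g)`, and such a form yields an affine structure through
`θ (∇_u v, w) = -θ (v, ⁅u, w⁆)`: closedness of `θ` makes `∇` torsion-free and the Jacobi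
identity makes it flat.
-/

open LieAlgebra Module

section AffineStructure

variable {K Q : Type*} [Field K] [LieRing Q] [LieAlgebra K Q]

def IsAffineStructure (D : Q →ₗ[K] Q →ₗ[K] Q) : Prop :=
  (∀ U V, D U V - D V U = ⁅U, V⁆) ∧ (∀ U V W, D U (D V W) - D V (D U W) = D ⁅U, V⁆ W)

theorem exists_isAffineStructure_of_injective [FiniteDimensional K Q]
    (θ : Q →ₗ[K] Q →ₗ[K] K) (hθ : Function.Injective θ)
    (hclosed : ∀ u v w, θ ⁅u, v⁆ w = θ u ⁅v, w⁆ - θ v ⁅u, w⁆) :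
    ∃ D : Q →ₗ[K] Q →ₗ[K] Q, IsAffineStructure D := by
  let e : Q ≃ₗ[K] Dual K Q := LinearEquiv.ofBijective θ
    ⟨hθ, (LinearMap.injective_iff_surjective_of_finrank_eq_finrank
      Subspace.dual_finrank_eq.symm).mp hθ⟩
  let D : Q →ₗ[K] Q →ₗ[K] Q :=
    -(((LinearMap.llcomp K Q Q K).compl₁₂ θ (ad K Q : Q →ₗ[K] End K Q)).flip.compr₂
      e.symm.toLinearMap)
  have hD : ∀ u v z, θ (D u v) z = -θ v ⁅u, z⁆ := fun u v z => by
    simp [D, show ∀ f, θ (e.symm f) = f from e.apply_symm_apply]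
  refine ⟨D, fun U V => hθ ?_, fun U V W => hθ ?_⟩
  · ext z
    simp only [map_sub, LinearMap.sub_apply, hD, hclosed]
    ring
  · ext z
    simp only [map_sub, LinearMap.sub_apply, hD, lie_lie]
    ring

end AffineStructure

section ContactForm

variable {K L : Type*} [Field K] [LieRing L] [LieAlgebra K L]

def IsContactForm (ω : Dual K L) : Prop :=
  ∀ X : L, ω X = 0 → (∀ Y : L, ω Y = 0 → ω ⁅X, Y⁆ = 0) → X = 0

/-- `-dω`. -/
def lieForm (ω : Dual K L) : L →ₗ[K] L →ₗ[K] K :=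
  (ad K L : L →ₗ[K] End K L).compr₂ ω

@[simp]
theorem lieForm_apply (ω : Dual K L) (X Y : L) : lieForm ω X Y = ω ⁅X, Y⁆ := rfl

theorem center_le_ker_lieForm (ω : Dual K L) :
    (center K L).toSubmodule ≤ LinearMap.ker (lieForm ω) := fun X hX => by
  ext Y
  rw [lieForm_apply, ← lie_skew, (LieModule.mem_maxTrivSubmodule K L L X).mp hX Y]
  simp

theorem center_le_ker_lieForm_flip (ω : Dual K L) :
    (center K L).toSubmodule ≤ LinearMap.ker (lieForm ω).flip := fun Y hY => by
  ext X
  simp [(LieModule.mem_maxTrivSubmodule K L L Y).mp hY X]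

theorem finrank_ker_lieForm_le_one [FiniteDimensional K L] {ω : Dual K L}
    (hω : IsContactForm ω) : finrank K (LinearMap.ker (lieForm ω)) ≤ 1 := by
  have hinj : Function.Injective (ω.domRestrict (LinearMap.ker (lieForm ω))) := by
    rw [← LinearMap.ker_eq_bot, eq_bot_iff]
    rintro ⟨X, hX⟩ hωX
    simp only [Submodule.mem_bot, Submodule.mk_eq_zero]
    exact hω X hωX fun Y _ => LinearMap.congr_fun hX Y
  simpa using LinearMap.finrank_le_finrank_of_injective hinj

theorem center_eq_ker_lieForm [FiniteDimensional K L] [Nontrivial L] [LieRing.IsNilpotent L]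
    {ω : Dual K L} (hω : IsContactForm ω) :
    (center K L).toSubmodule = LinearMap.ker (lieForm ω) :=
  Submodule.eq_of_le_of_finrank_le (center_le_ker_lieForm ω) <|
    (finrank_ker_lieForm_le_one hω).trans <|
      Module.finrank_pos_iff.mpr (non_trivial_center_of_isNilpotent (R := K) (L := L))

theorem finrank_center_eq_one [FiniteDimensional K L] [Nontrivial L] [LieRing.IsNilpotent L]
    {ω : Dual K L} (hω : IsContactForm ω) : finrank K (center K L) = 1 := by
  have hle := finrank_ker_lieForm_le_one hω
  rw [← center_eq_ker_lieForm hω] at hle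
  exact le_antisymm hle <|
    Module.finrank_pos_iff.mpr (non_trivial_center_of_isNilpotent (R := K) (L := L))

def centerQuotientForm (ω : Dual K L) :
    (L ⧸ center K L) →ₗ[K] (L ⧸ center K L) →ₗ[K] K :=
  (lieForm ω).liftQ₂ _ _ (center_le_ker_lieForm ω) (center_le_ker_lieForm_flip ω)

theorem centerQuotientForm_mk (ω : Dual K L) (X Y : L) :
    centerQuotientForm ω (LieSubmodule.Quotient.mk X) (LieSubmodule.Quotient.mk Y) =
      ω ⁅X, Y⁆ := rfl

theorem injective_centerQuotientForm {ω : Dual K L}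
    (hω : LinearMap.ker (lieForm ω) ≤ (center K L).toSubmodule) :
    Function.Injective (centerQuotientForm ω) := by
  rw [← LinearMap.ker_eq_bot, eq_bot_iff]
  rintro ⟨X⟩ hX
  have hXY : ∀ Y : L, ω ⁅X, Y⁆ = 0 := fun Y =>
    (centerQuotientForm_mk ω X Y).symm.trans (LinearMap.congr_fun hX _)
  exact (LieSubmodule.Quotient.mk_eq_zero _).mpr (hω (LinearMap.ext hXY))

theorem centerQuotientForm_lie (ω : Dual K L) (u v w : L ⧸ center K L) :
    centerQuotientForm ω ⁅u, v⁆ w =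
      centerQuotientForm ω u ⁅v, w⁆ - centerQuotientForm ω v ⁅u, w⁆ := by
  obtain ⟨X, rfl⟩ := LieSubmodule.Quotient.surjective_mk' (center K L) u
  obtain ⟨Y, rfl⟩ := LieSubmodule.Quotient.surjective_mk' (center K L) v
  obtain ⟨Z, rfl⟩ := LieSubmodule.Quotient.surjective_mk' (center K L) w
  change ω ⁅⁅X, Y⁆, Z⁆ = ω ⁅X, ⁅Y, Z⁆⁆ - ω ⁅Y, ⁅X, Z⁆⁆
  rw [lie_lie, map_sub]

end ContactForm

theorem contact_nilpotent_is_central_extension_of_affine_general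
    (L : Type*) [LieRing L] [LieAlgebra ℝ L] [FiniteDimensional ℝ L]
    [LieRing.IsNilpotent L]
    (ω : L →ₗ[ℝ] ℝ) (hω : ω ≠ 0)
    (hcontact : ∀ X : L, ω X = 0 → (∀ Y : L, ω Y = 0 → ω ⁅X, Y⁆ = 0) → X = 0) :
    Module.finrank ℝ (LieAlgebra.center ℝ L) = 1 ∧
    Function.Surjective (LieSubmodule.Quotient.mk' (LieAlgebra.center ℝ L)) ∧
    (∀ X Y : L, LieSubmodule.Quotient.mk' (LieAlgebra.center ℝ L) ⁅X, Y⁆ =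
      ⁅LieSubmodule.Quotient.mk' (LieAlgebra.center ℝ L) X,
       LieSubmodule.Quotient.mk' (LieAlgebra.center ℝ L) Y⁆) ∧
    (∀ X : L, LieSubmodule.Quotient.mk' (LieAlgebra.center ℝ L) X = 0 ↔
      X ∈ LieAlgebra.center ℝ L) ∧
    (∃ D : (L ⧸ LieAlgebra.center ℝ L) →ₗ[ℝ] (L ⧸ LieAlgebra.center ℝ L) →ₗ[ℝ]
        (L ⧸ LieAlgebra.center ℝ L),
      (∀ U V, D U V - D V U = ⁅U, V⁆) ∧
      (∀ U V W, D U (D V W) - D V (D U W) = D ⁅U, V⁆ W)) := by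
  obtain ⟨X, hX⟩ := DFunLike.ne_iff.mp hω
  have : Nontrivial L := nontrivial_of_ne X 0 fun hX0 => hX (by simp [hX0])
  exact ⟨finrank_center_eq_one hcontact, LieSubmodule.Quotient.surjective_mk' _,
    LieSubmodule.Quotient.mk_bracket _, fun _ => LieSubmodule.Quotient.mk_eq_zero _,
    exists_isAffineStructure_of_injective _
      (injective_centerQuotientForm (center_eq_ker_lieForm hcontact).ge)
      (centerQuotientForm_lie ω)⟩

/-- A nilpotent real Lie algebra of dimension `2p+1` (`p ≥ 1`) admitting a
contact form is a one-dimensional central extension of a Lie algebra admitting an affine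
structure: the canonical projection `π : g → g/Z(g)` is a surjective Lie algebra morphism whose
kernel is the one-dimensional center, and `g/Z(g)` admits an affine structure. -/
theorem contact_nilpotent_is_central_extension_of_affine
    (L : Type*) [LieRing L] [LieAlgebra ℝ L] [FiniteDimensional ℝ L]
    [LieRing.IsNilpotent L]
    (p : ℕ) (hp : 1 ≤ p) (hdim : Module.finrank ℝ L = 2 * p + 1)
    (ω : L →ₗ[ℝ] ℝ) (hω : ω ≠ 0)
    (hcontact : ∀ X : L, ω X = 0 → (∀ Y : L, ω Y = 0 → ω ⁅X, Y⁆ = 0) → X = 0) :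
    Module.finrank ℝ (LieAlgebra.center ℝ L) = 1 ∧
    Function.Surjective (LieSubmodule.Quotient.mk' (LieAlgebra.center ℝ L)) ∧
    (∀ X Y : L, LieSubmodule.Quotient.mk' (LieAlgebra.center ℝ L) ⁅X, Y⁆ =
      ⁅LieSubmodule.Quotient.mk' (LieAlgebra.center ℝ L) X,
       LieSubmodule.Quotient.mk' (LieAlgebra.center ℝ L) Y⁆) ∧
    (∀ X : L, LieSubmodule.Quotient.mk' (LieAlgebra.center ℝ L) X = 0 ↔
      X ∈ LieAlgebra.center ℝ L) ∧
    (∃ D : (L ⧸ LieAlgebra.center ℝ L) →ₗ[ℝ] (L ⧸ LieAlgebra.center ℝ L) →ₗ[ℝ]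
        (L ⧸ LieAlgebra.center ℝ L),
      (∀ U V, D U V - D V U = ⁅U, V⁆) ∧
      (∀ U V W, D U (D V W) - D V (D U W) = D ⁅U, V⁆ W)) :=
  contact_nilpotent_is_central_extension_of_affine_general L ω hω hcontact
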